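/- arXiv:0707.3937 — 2 statements merged into one kernel-verified Lean document; each statement's English description precedes it below -/
import Mathlib

section
/- Let W be a vector space over a field K of characteristic zero. An element x of the tensor algebra T(W) lying in positive tensor degree satisfies s(x) = 2x (where s = μΔ is the modified shuffle operator) if and only if x is a primitive element of T(W), i.e. x lies in the free Lie algebra L(W) ⊆ T(W). -/
open scoped TensorProduct

/-- The shuffle coproduct on the tensor algebra: the algebra map determined by
declaring every element of `W` primitive. -/
noncomputable def comul (K W : Type*) [CommRing K] [AddCommGroup W] [Module K W] :
    TensorAlgebra K W →ₐ[K] TensorAlgebra K W ⊗[K] TensorAlgebra K W :=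
  TensorAlgebra.lift K
    ((Algebra.TensorProduct.includeLeft.toLinearMap ∘ₗ TensorAlgebra.ι K) +
     (Algebra.TensorProduct.includeRight.toLinearMap ∘ₗ TensorAlgebra.ι K))

/-- The modified shuffle operator `s = μ ∘ Δ`. -/
noncomputable def shuffleOp (K W : Type*) [CommRing K] [AddCommGroup W] [Module K W] :
    TensorAlgebra K W →ₗ[K] TensorAlgebra K W :=
  LinearMap.mul' K (TensorAlgebra K W) ∘ₗ (comul K W).toLinearMap

attribute [local instance 100] LieRing.ofAssociativeRing

/-!
`s = μ ∘ Δ` preserves the degree and, `T(W)` being cocommutative, is a coalgebra map, so it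
commutes with the reduced coproduct `Δ̄ x = Δ x - x ⊗ 1 - 1 ⊗ x`, which sends `T_n` into the sum of
the `T_p ⊗ T_q` with `p, q ≥ 1` and `p + q = n`. By induction on `n`, `∏_{k=1}^n (s - 2^k)`
vanishes on `T_n`: on those `T_p ⊗ T_q` the operator `s ⊗ s` only has the eigenvalues `2^m`,
`2 ≤ m ≤ n`, so for `x ∈ T_n` the element `∏_{k=2}^n (s - 2^k) x` is killed by `Δ̄`, i.e. it is
primitive and hence a `2`-eigenvector. If moreover `s x = 2 x`, that element is a nonzero multiple
of `x`, so `x` is primitive. A primitive `x ∈ T_n` equals `D x / n` for the Dynkin operator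
`D = μ ∘ (S ⊗ N) ∘ Δ` (`S` the antipode, `N` the degree operator), and `D` takes values in the Lie
algebra generated by `W` because `D (x w) = [D x, w] + ε(x) w`. The degree-zero component of a
`2`-eigenvector vanishes since `s` fixes the scalars.
-/

open TensorAlgebra TensorProduct Polynomial Module.End

namespace Module.End

theorem ker_aeval_prod_X_sub_C {K V ι : Type*} [Field K] [AddCommGroup V] [Module K V]
    (f : End K V) (s : Finset ι) {c : ι → K} (hc : Set.InjOn c s) :
    LinearMap.ker (aeval f (∏ i ∈ s, (X - C (c i)))) = ⨆ i ∈ s, f.eigenspace (c i) := by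
  classical
  induction s using Finset.induction_on with
  | empty =>
    simp only [Finset.prod_empty, map_one, Finset.notMem_empty, iSup_false, iSup_bot]
    exact LinearMap.ker_id
  | insert i s hi ih =>
    have hcop : IsCoprime (X - C (c i)) (∏ j ∈ s, (X - C (c j))) :=
      IsCoprime.prod_right fun j hj ↦ isCoprime_X_sub_C_of_isUnit_sub <| IsUnit.mk0 _ <|
        sub_ne_zero.2 fun h ↦ hi (hc (by simp) (by simp [hj]) h ▸ hj)
    rw [Finset.prod_insert hi, ← sup_ker_aeval_eq_ker_aeval_mul_of_coprime f hcop,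
      Finset.iSup_insert, ih (hc.mono (by simp)), eigenspace_def]
    congr 2
    simp [Algebra.algebraMap_eq_smul_one]

theorem tmul_mem_eigenspace_map {R M N : Type*} [CommRing R] [AddCommGroup M] [Module R M]
    [AddCommGroup N] [Module R N] {f : End R M} {g : End R N} {μ ν : R} {a : M} {b : N}
    (ha : a ∈ f.eigenspace μ) (hb : b ∈ g.eigenspace ν) :
    a ⊗ₜ[R] b ∈ eigenspace (TensorProduct.map f g) (μ * ν) := by
  rw [mem_eigenspace_iff] at ha hb ⊢
  rw [map_tmul, ha, hb, smul_tmul_smul]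

theorem tmul_mem_iSup_eigenspace_map {R M N ι κ : Type*} [CommRing R] [AddCommGroup M]
    [Module R M] [AddCommGroup N] [Module R N] {f : End R M} {g : End R N} {s : Finset ι}
    {t : Finset κ} {c : ι → R} {d : κ → R} {a : M} {b : N}
    (ha : a ∈ ⨆ i ∈ s, f.eigenspace (c i)) (hb : b ∈ ⨆ j ∈ t, g.eigenspace (d j)) :
    a ⊗ₜ[R] b ∈ ⨆ i ∈ s, ⨆ j ∈ t, eigenspace (TensorProduct.map f g) (c i * d j) := by
  obtain ⟨α, rfl⟩ := (Submodule.mem_iSup_finset_iff_exists_sum _ a).1 ha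
  obtain ⟨β, rfl⟩ := (Submodule.mem_iSup_finset_iff_exists_sum _ b).1 hb
  rw [sum_tmul]
  refine Submodule.sum_mem _ fun i hi ↦ ?_
  rw [tmul_sum]
  refine Submodule.sum_mem _ fun j hj ↦ ?_
  have hle : eigenspace (TensorProduct.map f g) (c i * d j) ≤
      ⨆ i ∈ s, ⨆ j ∈ t, eigenspace (TensorProduct.map f g) (c i * d j) :=
    le_iSup₂_of_le i hi <| le_iSup₂_of_le j hj le_rfl
  exact hle (tmul_mem_eigenspace_map (α i).2 (β j).2)

end Module.End

theorem LinearMap.apply_aeval_of_comp_eq {R M N : Type*} [CommRing R] [AddCommGroup M]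
    [Module R M] [AddCommGroup N] [Module R N] {f : Module.End R M} {f' : Module.End R N}
    (g : M →ₗ[R] N) (h : g ∘ₗ f = f' ∘ₗ g) (P : R[X]) (x : M) :
    g (aeval f P x) = aeval f' P (g x) := by
  induction P using Polynomial.induction_on generalizing x with
  | C a => simp [Module.algebraMap_end_apply]
  | add p q hp hq => simp [hp, hq]
  | monomial n a ih =>
    rw [pow_succ, ← mul_assoc, map_mul (aeval f) _ X, map_mul (aeval f') _ X, aeval_X, aeval_X,
      mul_apply, mul_apply, ih, ← LinearMap.comp_apply g f, h, LinearMap.comp_apply]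

theorem two_pow_injective (K : Type*) [Semiring K] [CharZero K] :
    Function.Injective fun k : ℕ ↦ (2 : K) ^ k := fun a b hab ↦
  Nat.pow_right_injective le_rfl <| Nat.cast_injective (R := K) <| by simpa using hab

theorem DirectSum.decompose_apply_of_mapsTo {ι M σ : Type*} [DecidableEq ι] [AddCommMonoid M]
    [SetLike σ M] [AddSubmonoidClass σ M] (𝒜 : ι → σ) [DirectSum.Decomposition 𝒜] {F : Type*}
    [FunLike F M M] [AddMonoidHomClass F M M] (f : F) (hf : ∀ i, Set.MapsTo f (𝒜 i) (𝒜 i))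
    (x : M) (i : ι) :
    (DirectSum.decompose 𝒜 (f x) i : M) = f (DirectSum.decompose 𝒜 x i) := by
  induction x using DirectSum.Decomposition.inductionOn 𝒜 with
  | zero => simp
  | @homogeneous j y =>
    rcases eq_or_ne i j with rfl | hne
    · rw [DirectSum.decompose_of_mem_same _ (hf _ y.2), DirectSum.decompose_coe,
        DirectSum.of_eq_same]
    · rw [DirectSum.decompose_of_mem_ne _ (hf _ y.2) hne.symm, DirectSum.decompose_coe,
        DirectSum.of_eq_of_ne _ _ _ hne, ZeroMemClass.coe_zero, map_zero]
  | add y z hy hz => simp [hy, hz]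

namespace TensorAlgebra

section CommRing

variable {K W : Type*} [CommRing K] [AddCommGroup W] [Module K W]

local notation "T" => TensorAlgebra K W

theorem comul_ι (w : W) : comul K W (ι K w) = ι K w ⊗ₜ[K] 1 + 1 ⊗ₜ[K] ι K w := by
  simp [comul]

variable (K W) in
noncomputable def primitives : LieSubalgebra K T where
  carrier := {x | comul K W x = x ⊗ₜ[K] 1 + 1 ⊗ₜ[K] x}
  add_mem' {a b} ha hb := by
    change comul K W a = _ at ha
    change comul K W b = _ at hb
    change comul K W (a + b) = _
    rw [map_add, ha, hb, add_tmul, tmul_add]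
    abel
  zero_mem' := by simp
  smul_mem' c x hx := by
    change comul K W x = _ at hx
    change comul K W (c • x) = _
    rw [map_smul, hx, smul_add, smul_tmul', tmul_smul]
  lie_mem' {a b} ha hb := by
    change comul K W a = _ at ha
    change comul K W b = _ at hb
    change comul K W ⁅a, b⁆ = _
    simp only [Ring.lie_def, map_sub, map_mul, ha, hb, add_mul, mul_add,
      Algebra.TensorProduct.tmul_mul_tmul, one_mul, mul_one, sub_tmul, tmul_sub]
    abel

theorem mem_primitives {x : T} : x ∈ primitives K W ↔ comul K W x = x ⊗ₜ[K] 1 + 1 ⊗ₜ[K] x :=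
  Iff.rfl

theorem lieSpan_range_ι_le_primitives :
    LieSubalgebra.lieSpan K T (Set.range (ι K)) ≤ primitives K W :=
  LieSubalgebra.lieSpan_le.2 <| Set.range_subset_iff.2 comul_ι

theorem shuffleOp_of_mem_primitives {x : T} (hx : x ∈ primitives K W) :
    shuffleOp K W x = (2 : K) • x := by
  simp [shuffleOp, mem_primitives.1 hx, two_smul]

theorem shuffleOp_algebraMap (r : K) : shuffleOp K W (algebraMap K T r) = algebraMap K T r := by
  simp [shuffleOp]

theorem tensorTensorTensorComm_comul_comul (x : T) :
    tensorTensorTensorComm K T T T T (map (comul K W).toLinearMap (comul K W).toLinearMap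
      (comul K W x)) = map (comul K W).toLinearMap (comul K W).toLinearMap (comul K W x) := by
  let Δ₂ : T →ₐ[K] (T ⊗[K] T) ⊗[K] (T ⊗[K] T) :=
    (Algebra.TensorProduct.map (comul K W) (comul K W)).comp (comul K W)
  have : (Algebra.TensorProduct.tensorTensorTensorComm K K K K T T T T).toAlgHom.comp Δ₂ =
      Δ₂ := by
    ext w
    simp only [Δ₂, AlgHom.comp_toLinearMap, AlgEquiv.toAlgHom_toLinearMap,
      Algebra.TensorProduct.toLinearEquiv_tensorTensorTensorComm,
      Algebra.TensorProduct.toLinearMap_map, LinearMap.coe_comp, LinearEquiv.coe_coe,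
      AlgHom.coe_toLinearMap, Function.comp_apply, comul_ι, map_add, AlgebraTensorModule.map_tmul,
      AlgHom.toLinearMap_apply, map_one, Algebra.TensorProduct.one_def, add_tmul, tmul_add,
      tensorTensorTensorComm_tmul]
    abel
  exact AlgHom.congr_fun this x

theorem comul_shuffleOp (x : T) :
    comul K W (shuffleOp K W x) = map (shuffleOp K W) (shuffleOp K W) (comul K W x) := by
  have hmul (z : T ⊗[K] T) : comul K W (LinearMap.mul' K T z) =
      LinearMap.mul' K (T ⊗[K] T) (map (comul K W).toLinearMap (comul K W).toLinearMap z) := by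
    induction z using TensorProduct.induction_on with
    | zero => simp
    | tmul a b => simp
    | add u v hu hv => simp [hu, hv]
  rw [shuffleOp, LinearMap.comp_apply, AlgHom.toLinearMap_apply, hmul, LinearMap.mul'_tensor,
    LinearMap.comp_apply, LinearEquiv.coe_coe, tensorTensorTensorComm_comul_comul,
    ← LinearMap.comp_apply, ← TensorProduct.map_comp]

theorem shuffleOp_one : shuffleOp K W 1 = 1 := by
  simpa using shuffleOp_algebraMap (K := K) (W := W) 1

variable (K W) in
noncomputable def reducedComul : T →ₗ[K] T ⊗[K] T :=
  (comul K W).toLinearMap - (TensorProduct.mk K T T).flip 1 - TensorProduct.mk K T T 1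

theorem reducedComul_apply (x : T) :
    reducedComul K W x = comul K W x - x ⊗ₜ[K] 1 - 1 ⊗ₜ[K] x :=
  rfl

theorem mem_primitives_iff_reducedComul_eq_zero {x : T} :
    x ∈ primitives K W ↔ reducedComul K W x = 0 := by
  rw [mem_primitives, reducedComul_apply, sub_sub, sub_eq_zero]

theorem reducedComul_shuffleOp (x : T) :
    reducedComul K W (shuffleOp K W x) =
      map (shuffleOp K W) (shuffleOp K W) (reducedComul K W x) := by
  simp [reducedComul_apply, comul_shuffleOp, shuffleOp_one]

theorem shuffleOp_eq_mul'_reducedComul_add (x : T) :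
    shuffleOp K W x = LinearMap.mul' K T (reducedComul K W x) + (2 : K) • x := by
  simp [shuffleOp, reducedComul_apply, two_smul]

theorem reducedComul_ι_mul (w : W) (y : T) :
    reducedComul K W (ι K w * y) = (ι K w ⊗ₜ[K] 1 + 1 ⊗ₜ[K] ι K w) * reducedComul K W y +
      ι K w ⊗ₜ[K] y + y ⊗ₜ[K] ι K w := by
  simp only [reducedComul_apply, map_mul, comul_ι, mul_sub, add_mul,
    Algebra.TensorProduct.tmul_mul_tmul, one_mul, mul_one]
  abel

variable (K W) in
abbrev homogeneous (n : ℕ) : Submodule K T :=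
  LinearMap.range (ι K : W →ₗ[K] T) ^ n

theorem mul_mem_homogeneous {p q : ℕ} {a b : T} (ha : a ∈ homogeneous K W p)
    (hb : b ∈ homogeneous K W q) : a * b ∈ homogeneous K W (p + q) := by
  rw [homogeneous, pow_add]
  exact Submodule.mul_mem_mul ha hb

theorem mem_homogeneous_zero {x : T} : x ∈ homogeneous K W 0 ↔ ∃ r, algebraMap K T r = x := by
  rw [homogeneous, pow_zero, Submodule.mem_one]

theorem ι_mem_homogeneous_one (w : W) : ι K w ∈ homogeneous K W 1 := by
  simp

variable (K W) in
noncomputable def mixedTensors (n : ℕ) : Submodule K (T ⊗[K] T) :=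
  Submodule.span K {z | ∃ p q, 0 < p ∧ 0 < q ∧ p + q = n ∧
    ∃ a ∈ homogeneous K W p, ∃ b ∈ homogeneous K W q, a ⊗ₜ[K] b = z}

theorem tmul_mem_mixedTensors {p q : ℕ} (hp : 0 < p) (hq : 0 < q) {a b : T}
    (ha : a ∈ homogeneous K W p) (hb : b ∈ homogeneous K W q) :
    a ⊗ₜ[K] b ∈ mixedTensors K W (p + q) :=
  Submodule.subset_span ⟨p, q, hp, hq, rfl, a, ha, b, hb, rfl⟩

theorem mixedTensors_le {n : ℕ} {N : Submodule K (T ⊗[K] T)}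
    (h : ∀ p q, 0 < p → 0 < q → p + q = n →
      ∀ a ∈ homogeneous K W p, ∀ b ∈ homogeneous K W q, a ⊗ₜ[K] b ∈ N) :
    mixedTensors K W n ≤ N :=
  Submodule.span_le.2 fun _ ⟨p, q, hp, hq, hpq, a, ha, b, hb, hz⟩ ↦ hz ▸ h p q hp hq hpq a ha b hb

theorem mixedTensors_le_comap_mul' (n : ℕ) :
    mixedTensors K W n ≤ (homogeneous K W n).comap (LinearMap.mul' K T) :=
  mixedTensors_le fun _ _ _ _ hpq _ ha _ hb ↦ hpq ▸ mul_mem_homogeneous ha hb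

theorem mixedTensors_le_comap_mulLeft (n : ℕ) (w : W) :
    mixedTensors K W n ≤ (mixedTensors K W (n + 1)).comap
      (LinearMap.mulLeft K (ι K w ⊗ₜ[K] (1 : T) + 1 ⊗ₜ[K] ι K w)) := by
  refine mixedTensors_le fun p q hp hq hpq a ha b hb ↦ ?_
  have hwa := mul_mem_homogeneous (ι_mem_homogeneous_one w) ha
  have hwb := mul_mem_homogeneous (ι_mem_homogeneous_one w) hb
  simp only [Submodule.mem_comap, LinearMap.mulLeft_apply, add_mul,
    Algebra.TensorProduct.tmul_mul_tmul, one_mul]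
  refine add_mem ?_ ?_
  · convert tmul_mem_mixedTensors (by omega) hq hwa hb using 2
    omega
  · convert tmul_mem_mixedTensors hp (by omega) ha hwb using 2
    omega

theorem reducedComul_mem_mixedTensors {n : ℕ} (hn : 0 < n) {x : T}
    (hx : x ∈ homogeneous K W n) : reducedComul K W x ∈ mixedTensors K W n := by
  induction hx using Submodule.pow_induction_on_left' with
  | algebraMap r => exact absurd hn (lt_irrefl 0)
  | add a b i _ _ ha hb => simpa using add_mem (ha hn) (hb hn)
  | mem_mul m hm i y hy ih =>
    obtain ⟨w, rfl⟩ := hm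
    rcases Nat.eq_zero_or_pos i with rfl | hi
    · obtain ⟨r, rfl⟩ := mem_homogeneous_zero.1 hy
      rw [← Algebra.commutes, ← Algebra.smul_def, map_smul,
        mem_primitives_iff_reducedComul_eq_zero.1 (comul_ι w), smul_zero]
      exact zero_mem _
    · have hw := ι_mem_homogeneous_one (K := K) w
      rw [reducedComul_ι_mul]
      refine add_mem (add_mem (mixedTensors_le_comap_mulLeft i w (ih hi)) ?_)
        (tmul_mem_mixedTensors hi one_pos hy hw)
      simpa [add_comm] using tmul_mem_mixedTensors one_pos hi hw hy

theorem shuffleOp_mem_homogeneous {n : ℕ} {x : T} (hx : x ∈ homogeneous K W n) :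
    shuffleOp K W x ∈ homogeneous K W n := by
  rcases Nat.eq_zero_or_pos n with rfl | hn
  · obtain ⟨r, rfl⟩ := mem_homogeneous_zero.1 hx
    rwa [shuffleOp_algebraMap]
  · rw [shuffleOp_eq_mul'_reducedComul_add]
    exact add_mem (mixedTensors_le_comap_mul' n (reducedComul_mem_mixedTensors hn hx))
      (Submodule.smul_mem _ _ hx)

theorem induction_on_mul_ι {C : T → Prop} (one : C 1) (mul_ι : ∀ x w, C x → C (x * ι K w))
    (add : ∀ x y, C x → C y → C (x + y)) (smul : ∀ (r : K) x, C x → C (r • x)) (x : T) :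
    C x := by
  suffices ∀ y x, C x → C (x * y) by simpa using this x 1 one
  intro y
  induction y using TensorAlgebra.induction with
  | algebraMap r =>
    intro x hx
    rw [← Algebra.commutes, ← Algebra.smul_def]
    exact smul r x hx
  | ι w => exact fun x ↦ mul_ι x w
  | mul a b ha hb => exact fun x hx ↦ mul_assoc x a b ▸ hb _ (ha x hx)
  | add a b ha hb => exact fun x hx ↦ (mul_add x a b).symm ▸ add _ _ (ha x hx) (hb x hx)

variable (K W) in
noncomputable def antipode : T →ₗ[K] T :=
  (MulOpposite.opLinearEquiv K).symm.toLinearMap ∘ₗ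
    (lift K ((MulOpposite.opLinearEquiv K).toLinearMap ∘ₗ (-ι K))).toLinearMap

theorem antipode_ι (w : W) : antipode K W (ι K w) = -ι K w := by
  simp [antipode]

theorem antipode_one : antipode K W 1 = 1 := by
  simp [antipode]

theorem antipode_mul (a b : T) : antipode K W (a * b) = antipode K W b * antipode K W a := by
  simp [antipode]

-- The second component of this algebra map into the square-zero extension sends `w` to `w` and
-- is therefore a derivation of `T`: it multiplies `T_n` by `n`.
variable (K W) in
noncomputable def gradingLift : T →ₐ[K] TrivSqZeroExt T T :=
  lift K ((TrivSqZeroExt.inlAlgHom K T T).toLinearMap ∘ₗ ι K +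
    (TrivSqZeroExt.inrHom T T).restrictScalars K ∘ₗ ι K)

variable (K W) in
noncomputable def gradingOp : T →ₗ[K] T :=
  (TrivSqZeroExt.sndHom T T).restrictScalars K ∘ₗ (gradingLift K W).toLinearMap

theorem fst_gradingLift (x : T) : (gradingLift K W x).fst = x := by
  have : (TrivSqZeroExt.fstHom K T T).comp (gradingLift K W) = AlgHom.id K T := by
    ext w
    simp [gradingLift]
  exact AlgHom.congr_fun this x

theorem gradingOp_mul (a b : T) :
    gradingOp K W (a * b) = a * gradingOp K W b + gradingOp K W a * b := by
  simp [gradingOp, TrivSqZeroExt.snd_mul, fst_gradingLift]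

theorem gradingOp_ι (w : W) : gradingOp K W (ι K w) = ι K w := by
  simp [gradingOp, gradingLift]

theorem gradingOp_algebraMap (r : K) : gradingOp K W (algebraMap K T r) = 0 := by
  simp [gradingOp, TrivSqZeroExt.algebraMap_eq_inl']

theorem gradingOp_one : gradingOp K W 1 = 0 := by
  simpa using gradingOp_algebraMap (K := K) (W := W) 1

theorem mul'_map_mulRight_comp (F G : T →ₗ[K] T) (c : T) (z : T ⊗[K] T) :
    LinearMap.mul' K T (map F (LinearMap.mulRight K c ∘ₗ G) z) =
      LinearMap.mul' K T (map F G z) * c := by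
  induction z using TensorProduct.induction_on with
  | zero => simp
  | tmul a b => simp [mul_assoc]
  | add u v hu hv => simp [hu, hv, add_mul]

theorem mul'_map_antipode_mul_comul_ι (G : T →ₗ[K] T) (w : W) (z : T ⊗[K] T) :
    LinearMap.mul' K T (map (antipode K W) G (z * comul K W (ι K w))) =
      LinearMap.mul' K T (map (antipode K W) (G ∘ₗ LinearMap.mulRight K (ι K w)) z) -
        ι K w * LinearMap.mul' K T (map (antipode K W) G z) := by
  induction z using TensorProduct.induction_on with
  | zero => simp
  | tmul a b =>
    simp only [comul_ι, mul_add, Algebra.TensorProduct.tmul_mul_tmul, mul_one, map_add, map_tmul,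
      antipode_mul, antipode_ι, neg_mul, LinearMap.mul'_apply, mul_assoc, LinearMap.coe_comp,
      Function.comp_apply, LinearMap.mulRight_apply]
    abel
  | add u v hu hv =>
    simp only [add_mul, map_add, hu, hv, mul_add]
    abel

theorem mul'_map_antipode_id_comul (x : T) :
    LinearMap.mul' K T (map (antipode K W) LinearMap.id (comul K W x)) =
      algebraMap K T (algebraMapInv x) := by
  induction x using induction_on_mul_ι with
  | one => simp [Algebra.TensorProduct.one_def, antipode_one]
  | mul_ι x w ih =>
    rw [map_mul, mul'_map_antipode_mul_comul_ι, LinearMap.id_comp,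
      ← LinearMap.comp_id (LinearMap.mulRight K (ι K w)), mul'_map_mulRight_comp, ih,
      Algebra.commutes, sub_self]
    simp [algebraMapInv]
  | add x y hx hy => simp [hx, hy]
  | smul r x hx =>
    rw [map_smul, map_smul, map_smul, hx, map_smul, smul_eq_mul, map_mul, Algebra.smul_def]

variable (K W) in
noncomputable def dynkin : T →ₗ[K] T :=
  LinearMap.mul' K T ∘ₗ map (antipode K W) (gradingOp K W) ∘ₗ (comul K W).toLinearMap

theorem dynkin_mul_ι (x : T) (w : W) :
    dynkin K W (x * ι K w) = ⁅dynkin K W x, ι K w⁆ + algebraMapInv x • ι K w := by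
  have hN : gradingOp K W ∘ₗ LinearMap.mulRight K (ι K w) =
      LinearMap.mulRight K (ι K w) ∘ₗ gradingOp K W +
        LinearMap.mulRight K (ι K w) ∘ₗ LinearMap.id := by
    ext b
    simp [gradingOp_mul, gradingOp_ι, add_comm]
  simp only [dynkin, LinearMap.comp_apply, AlgHom.toLinearMap_apply, map_mul,
    mul'_map_antipode_mul_comul_ι, hN, map_add_right, LinearMap.add_apply, map_add,
    mul'_map_mulRight_comp, mul'_map_antipode_id_comul, Ring.lie_def, Algebra.smul_def]
  abel

theorem dynkin_mem_lieSpan (x : T) :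
    dynkin K W x ∈ LieSubalgebra.lieSpan K T (Set.range (ι K)) := by
  induction x using induction_on_mul_ι with
  | one => simp [dynkin, Algebra.TensorProduct.one_def, gradingOp_one]
  | mul_ι x w ih =>
    have hw : ι K w ∈ LieSubalgebra.lieSpan K T (Set.range (ι K)) :=
      LieSubalgebra.subset_lieSpan ⟨w, rfl⟩
    rw [dynkin_mul_ι]
    exact add_mem (LieSubalgebra.lie_mem _ ih hw) (LieSubalgebra.smul_mem _ _ hw)
  | add x y hx hy => simpa using add_mem hx hy
  | smul r x hx => simpa using LieSubalgebra.smul_mem _ r hx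

theorem gradingOp_of_mem_homogeneous {n : ℕ} {x : T} (hx : x ∈ homogeneous K W n) :
    gradingOp K W x = (n : K) • x := by
  induction hx using Submodule.pow_induction_on_left' with
  | algebraMap r => simp [gradingOp_algebraMap]
  | add a b i _ _ ha hb => rw [map_add, ha, hb, smul_add]
  | mem_mul m hm i y hy ih =>
    obtain ⟨w, rfl⟩ := hm
    rw [gradingOp_mul, ih, gradingOp_ι, Nat.cast_succ, add_smul, one_smul, mul_smul_comm,
      add_comm]

theorem dynkin_of_mem_primitives {x : T} (hx : x ∈ primitives K W) :
    dynkin K W x = gradingOp K W x := by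
  simp [dynkin, mem_primitives.1 hx, gradingOp_one, antipode_one]

end CommRing

section Field

variable {K W : Type*} [Field K] [CharZero K] [AddCommGroup W] [Module K W]

local notation "T" => TensorAlgebra K W

theorem aeval_shuffleOp_mem_primitives {n : ℕ} (hn : 0 < n)
    (ih : ∀ m, 0 < m → m < n →
      homogeneous K W m ≤ ⨆ k ∈ Finset.Icc 1 m, eigenspace (shuffleOp K W) ((2 : K) ^ k))
    {x : T} (hx : x ∈ homogeneous K W n) :
    aeval (shuffleOp K W) (∏ k ∈ Finset.Icc 2 n, (X - C ((2 : K) ^ k))) x ∈ primitives K W := by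
  have hmixed : mixedTensors K W n ≤
      ⨆ m ∈ Finset.Icc 2 n, eigenspace (map (shuffleOp K W) (shuffleOp K W)) ((2 : K) ^ m) := by
    refine mixedTensors_le fun p q hp hq hpq a ha b hb ↦ ?_
    have hab := tmul_mem_iSup_eigenspace_map (ih p hp (by omega) ha) (ih q hq (by omega) hb)
    refine SetLike.le_def.1 (iSup₂_le fun j hj ↦ iSup₂_le fun k hk ↦ ?_) hab
    rw [Finset.mem_Icc] at hj hk
    simp only [← pow_add]
    exact le_iSup₂_of_le (j + k) (Finset.mem_Icc.2 ⟨by omega, by omega⟩) le_rfl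
  rw [← ker_aeval_prod_X_sub_C _ _ (two_pow_injective K).injOn] at hmixed
  rw [mem_primitives_iff_reducedComul_eq_zero, LinearMap.apply_aeval_of_comp_eq
    (f' := map (shuffleOp K W) (shuffleOp K W)) _ (LinearMap.ext reducedComul_shuffleOp)]
  exact hmixed (reducedComul_mem_mixedTensors hn hx)

theorem homogeneous_le_iSup_eigenspace_shuffleOp {n : ℕ} (hn : 0 < n) :
    homogeneous K W n ≤ ⨆ k ∈ Finset.Icc 1 n, eigenspace (shuffleOp K W) ((2 : K) ^ k) := by
  induction n using Nat.strong_induction_on with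
  | _ n ih =>
    intro x hx
    have hprim := aeval_shuffleOp_mem_primitives hn (fun m hm hmn ↦ ih m hmn hm) hx
    rw [← ker_aeval_prod_X_sub_C _ _ (two_pow_injective K).injOn, LinearMap.mem_ker,
      ← Finset.insert_Icc_add_one_left_eq_Icc hn, Finset.prod_insert (by simp), map_mul,
      mul_apply, map_sub, aeval_X, aeval_C, LinearMap.sub_apply, Module.algebraMap_end_apply,
      pow_one]
    exact sub_eq_zero.2 (shuffleOp_of_mem_primitives hprim)

theorem mem_primitives_of_shuffleOp_eq_two_smul {n : ℕ} (hn : 0 < n) {x : T}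
    (hx : x ∈ homogeneous K W n) (hs : shuffleOp K W x = (2 : K) • x) : x ∈ primitives K W := by
  have hprim := aeval_shuffleOp_mem_primitives hn
    (fun m hm _ ↦ homogeneous_le_iSup_eigenspace_shuffleOp hm) hx
  rw [aeval_apply_of_mem_apply_eq_smul hs] at hprim
  have hne : eval 2 (∏ k ∈ Finset.Icc 2 n, (X - C ((2 : K) ^ k))) ≠ 0 := by
    rw [eval_prod, Finset.prod_ne_zero_iff]
    intro k hk h
    rw [eval_sub, eval_X, eval_C, sub_eq_zero] at h
    have := two_pow_injective K ((pow_one 2).trans h)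
    simp at hk
    omega
  exact (Submodule.smul_mem_iff (primitives K W).toSubmodule hne).1 hprim

theorem mem_lieSpan_of_mem_primitives_of_mem_homogeneous {n : ℕ} (hn : n ≠ 0) {x : T}
    (hprim : x ∈ primitives K W) (hx : x ∈ homogeneous K W n) :
    x ∈ LieSubalgebra.lieSpan K T (Set.range (ι K)) := by
  have h := dynkin_mem_lieSpan (K := K) x
  rw [dynkin_of_mem_primitives hprim, gradingOp_of_mem_homogeneous hx] at h
  exact (Submodule.smul_mem_iff _ (Nat.cast_ne_zero.2 hn)).1 h

theorem mem_lieSpan_of_shuffleOp_eq_two_smul {x : T} (hs : shuffleOp K W x = (2 : K) • x) :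
    x ∈ LieSubalgebra.lieSpan K T (Set.range (ι K)) := by
  classical
  rw [← DirectSum.sum_support_decompose (homogeneous K W) x]
  refine sum_mem fun n _ ↦ ?_
  have hy := (DirectSum.decompose (homogeneous K W) x n).2
  have hys : shuffleOp K W (DirectSum.decompose (homogeneous K W) x n) =
      (2 : K) • (DirectSum.decompose (homogeneous K W) x n : T) := by
    rw [← DirectSum.decompose_apply_of_mapsTo _ _ (fun _ _ ↦ shuffleOp_mem_homogeneous), hs,
      DirectSum.decompose_smul, DirectSum.smul_apply, Submodule.coe_smul]
  rcases Nat.eq_zero_or_pos n with rfl | hn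
  · obtain ⟨r, hr⟩ := mem_homogeneous_zero.1 hy
    rw [← hr, shuffleOp_algebraMap, two_smul, left_eq_add] at hys
    rw [← hr, hys]
    exact zero_mem _
  · exact mem_lieSpan_of_mem_primitives_of_mem_homogeneous hn.ne'
      (mem_primitives_of_shuffleOp_eq_two_smul hn hy hys) hy

end Field

end TensorAlgebra

theorem stmt6_general {K W : Type*} [Field K] [CharZero K] [AddCommGroup W] [Module K W]
    (x : TensorAlgebra K W) :
    shuffleOp K W x = (2 : K) • x ↔
      x ∈ LieSubalgebra.lieSpan K (TensorAlgebra K W)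
            (Set.range (TensorAlgebra.ι K : W →ₗ[K] TensorAlgebra K W)) :=
  ⟨TensorAlgebra.mem_lieSpan_of_shuffleOp_eq_two_smul, fun h ↦
    TensorAlgebra.shuffleOp_of_mem_primitives (TensorAlgebra.lieSpan_range_ι_le_primitives h)⟩

/-- an element of the augmentation ideal of the tensor algebra satisfies
`s x = 2x` iff it lies in the free Lie algebra on `W`, realized as the Lie subalgebra of
`T(W)` generated by `W`. -/
theorem stmt6 {K W : Type*} [Field K] [CharZero K] [AddCommGroup W] [Module K W]
    (x : TensorAlgebra K W) (hx : TensorAlgebra.algebraMapInv (M := W) x = 0) :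
    shuffleOp K W x = (2 : K) • x ↔
      x ∈ LieSubalgebra.lieSpan K (TensorAlgebra K W)
            (Set.range (TensorAlgebra.ι K : W →ₗ[K] TensorAlgebra K W)) :=
  stmt6_general x
end

section
/- Let W be a vector space over a field K of characteristic zero, T(W) its tensor algebra with shuffle coproduct (W primitive), s = μΔ and s̃ = 1 ⊗ s as above, and N the norm operator acting on W^{⊗n} via N_n = Σ_{i=0}^{n−1} z_n^i. Then 2 · s̃ ∘ N = N ∘ s on ⊕_{i≥1} W^{⊗i}. -/
open scoped TensorProduct

/-- The pure tensor `x₁ ⊗ ⋯ ⊗ xₙ`, realized as the product `ι x₁ ⋯ ι xₙ` in the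
tensor algebra. -/
noncomputable def prodι (K : Type*) {W : Type*} [CommRing K] [AddCommGroup W] [Module K W]
    (l : List W) : TensorAlgebra K W :=
  (l.map (TensorAlgebra.ι K)).prod

/-! On a word `l`, `N` sums the rotations of `l` and `s` sums `u ++ v` over the unshuffles
`(u, v)` of `l`. A rotation of `u ++ v` starts inside `u` or inside `v`, and the symmetry
`(u, v) ↦ (v, u)` of the unshuffles makes both kinds contribute equally: this is the factor 2.
A rotation starting inside `u`, at the letter `lⱼ`, is `lⱼ` followed by an unshuffle term of
`l_{j+1} ⋯ lₙ l₁ ⋯ l_{j-1}`, whose left factor takes the letters of `u` after `lⱼ` and those of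
`v` before it; summing over `j` gives exactly `s̃ (N l)`. -/

namespace List

variable {α M : Type*} [AddCommMonoid M]

/-- The terms of the shuffle coproduct of a word: its splittings into two complementary
subsequences, with multiplicity. -/
def unshuffles : List α → Multiset (List α × List α)
  | [] => {([], [])}
  | a :: l =>
    (l.unshuffles.map fun p => (a :: p.1, p.2)) + (l.unshuffles.map fun p => (p.1, a :: p.2))

theorem unshuffles_map_swap (l : List α) : l.unshuffles.map Prod.swap = l.unshuffles := by
  induction l with
  | nil => rfl
  | cons a l ih =>
    conv_rhs => rw [unshuffles, ← ih]
    rw [unshuffles, Multiset.map_add, Multiset.map_map, Multiset.map_map, Multiset.map_map,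
      Multiset.map_map, add_comm]
    rfl

theorem unshuffles_append : ∀ u v : List α, (u ++ v).unshuffles =
    u.unshuffles.bind fun p => v.unshuffles.map fun q => (p.1 ++ q.1, p.2 ++ q.2)
  | [], v => by simp [unshuffles]
  | a :: u, v => by
    rw [cons_append, unshuffles, unshuffles_append u v, unshuffles, Multiset.add_bind,
      Multiset.map_bind, Multiset.map_bind, Multiset.bind_map, Multiset.bind_map]
    simp [Multiset.map_map, Function.comp]

theorem rotate_eq_getD_cons {l : List α} {j : ℕ} (d : α) (hj : j < l.length) :
    l.rotate j = l.getD j d :: (l.drop (j + 1) ++ l.take j) := by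
  rw [rotate_eq_drop_append_take hj.le, drop_eq_getElem_cons hj, getD_eq_getElem l d hj,
    cons_append]

theorem sum_range_rotate_append (f : List α → M) (u v : List α) :
    ∑ k ∈ Finset.range (u ++ v).length, f ((u ++ v).rotate k)
      = ∑ k ∈ Finset.range u.length, f (u.drop k ++ v ++ u.take k)
        + ∑ k ∈ Finset.range v.length, f (v.drop k ++ u ++ v.take k) := by
  rw [length_append, Finset.sum_range_add]
  congr 1 <;> refine Finset.sum_congr rfl fun k hk => ?_ <;> rw [Finset.mem_range] at hk
  · rw [rotate_eq_drop_append_take (by simp; omega), drop_append_of_le_length hk.le,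
      take_append_of_le_length hk.le, append_assoc]
  · rw [rotate_eq_drop_append_take (by simp; omega), drop_length_add_append,
      take_length_add_append, append_assoc]

/-- Marking a letter of the left factor of an unshuffle of `l` amounts to choosing its position
`j` in `l` and unshuffling the letters before and after it. -/
theorem sum_unshuffles_sum_range_fst_length (d : α) :
    ∀ (l : List α) (f : List α → List α → ℕ → M),
    (l.unshuffles.map fun p => ∑ i ∈ Finset.range p.1.length, f p.1 p.2 i).sum
      = ∑ j ∈ Finset.range l.length, ((l.drop (j + 1)).unshuffles.map fun q =>
          ((l.take j).unshuffles.map fun p =>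
            f (p.1 ++ l.getD j d :: q.1) (p.2 ++ q.2) p.1.length).sum).sum
  | [], f => by simp [unshuffles]
  | a :: l, f => by
    have ih_fst := sum_unshuffles_sum_range_fst_length d l fun A B i => f (a :: A) B (i + 1)
    have ih_snd := sum_unshuffles_sum_range_fst_length d l fun A B i => f A (a :: B) i
    have split_first : (l.unshuffles.map fun p =>
          ∑ i ∈ Finset.range (p.1.length + 1), f (a :: p.1) p.2 i).sum
        = (l.unshuffles.map fun p =>
            ∑ i ∈ Finset.range p.1.length, f (a :: p.1) p.2 (i + 1)).sum
          + (l.unshuffles.map fun p => f (a :: p.1) p.2 0).sum := by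
      rw [← Multiset.sum_map_add]
      exact congrArg Multiset.sum (Multiset.map_congr rfl fun p _ => Finset.sum_range_succ' _ _)
    rw [unshuffles, Multiset.map_add, Multiset.sum_add, Multiset.map_map, Multiset.map_map]
    simp only [Function.comp, length_cons]
    rw [split_first, ih_fst, ih_snd, Finset.sum_range_succ', add_right_comm]
    congr 1
    · rw [← Finset.sum_add_distrib]
      refine Finset.sum_congr rfl fun j _ => ?_
      simp only [drop_succ_cons, take_succ_cons, getD_cons_succ]
      rw [unshuffles, ← Multiset.sum_map_add]
      refine congrArg Multiset.sum (Multiset.map_congr rfl fun q _ => ?_)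
      rw [Multiset.map_add, Multiset.sum_add, Multiset.map_map, Multiset.map_map]
      simp [Function.comp, cons_append]
    · simp [unshuffles]

theorem sum_unshuffles_sum_range_rotate (f : List α → M) (l : List α) :
    (l.unshuffles.map fun p =>
        ∑ k ∈ Finset.range (p.1 ++ p.2).length, f ((p.1 ++ p.2).rotate k)).sum
      = 2 • (l.unshuffles.map fun p =>
          ∑ k ∈ Finset.range p.1.length, f (p.1.drop k ++ p.2 ++ p.1.take k)).sum := by
  simp only [sum_range_rotate_append, Multiset.sum_map_add, two_nsmul]
  congr 1
  conv_lhs => rw [← unshuffles_map_swap l]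
  rw [Multiset.map_map]
  rfl

theorem sum_range_sum_unshuffles_drop_append_take (d : α) (f : List α → M) (l : List α) :
    ∑ j ∈ Finset.range l.length, ((l.drop (j + 1) ++ l.take j).unshuffles.map fun q =>
        f (l.getD j d :: (q.1 ++ q.2))).sum
      = (l.unshuffles.map fun p =>
          ∑ k ∈ Finset.range p.1.length, f (p.1.drop k ++ p.2 ++ p.1.take k)).sum := by
  rw [sum_unshuffles_sum_range_fst_length d l fun A B k => f (A.drop k ++ B ++ A.take k)]
  refine Finset.sum_congr rfl fun j _ => ?_
  rw [unshuffles_append, Multiset.map_bind, Multiset.sum_bind]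
  refine congrArg Multiset.sum (Multiset.map_congr rfl fun q _ => ?_)
  conv_rhs => rw [← unshuffles_map_swap (l.take j)]
  rw [Multiset.map_map, Multiset.map_map]
  refine congrArg Multiset.sum (Multiset.map_congr rfl fun p _ => ?_)
  simp

end List

section ShuffleOp

variable {K W : Type*} [CommRing K] [AddCommGroup W] [Module K W]

theorem prodι_cons (a : W) (l : List W) :
    prodι K (a :: l) = TensorAlgebra.ι K a * prodι K l := by
  simp [prodι]

theorem prodι_append (l m : List W) : prodι K (l ++ m) = prodι K l * prodι K m := by
  simp [prodι]

theorem comul_ι (a : W) :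
    comul K W (TensorAlgebra.ι K a)
      = TensorAlgebra.ι K a ⊗ₜ[K] 1 + (1 : TensorAlgebra K W) ⊗ₜ[K] TensorAlgebra.ι K a := by
  simp [comul]

theorem comul_prodι (l : List W) :
    comul K W (prodι K l) = (l.unshuffles.map fun p => prodι K p.1 ⊗ₜ[K] prodι K p.2).sum := by
  induction l with
  | nil => simp [prodι, List.unshuffles, Algebra.TensorProduct.one_def]
  | cons a l ih =>
    rw [prodι_cons, map_mul, comul_ι, ih, List.unshuffles, Multiset.map_add, Multiset.sum_add,
      Multiset.map_map, Multiset.map_map, add_mul, ← Multiset.sum_map_mul_left,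
      ← Multiset.sum_map_mul_left]
    congr 1 <;>
      exact congrArg Multiset.sum (Multiset.map_congr rfl fun p _ => by
        simp [Algebra.TensorProduct.tmul_mul_tmul, prodι_cons])

theorem shuffleOp_prodι (l : List W) :
    shuffleOp K W (prodι K l) = (l.unshuffles.map fun p => prodι K (p.1 ++ p.2)).sum := by
  rw [shuffleOp, LinearMap.comp_apply, AlgHom.toLinearMap_apply, comul_prodι,
    map_multiset_sum, Multiset.map_map]
  exact congrArg Multiset.sum (Multiset.map_congr rfl fun p _ => by
    simp [LinearMap.mul'_apply, prodι_append])

theorem ι_mul_shuffleOp_prodι (a : W) (l : List W) :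
    TensorAlgebra.ι K a * shuffleOp K W (prodι K l)
      = (l.unshuffles.map fun p => prodι K (a :: (p.1 ++ p.2))).sum := by
  rw [shuffleOp_prodι, ← Multiset.sum_map_mul_left]
  exact congrArg Multiset.sum (Multiset.map_congr rfl fun p _ => (prodι_cons a _).symm)

end ShuffleOp

section CyclicOperator

variable {K W : Type*} [CommRing K] [AddCommGroup W] [Module K W]
  {z : Module.End K (TensorAlgebra K W)}

theorem pow_length_apply_prodι_append
    (hz : ∀ (l : List W) (a : W), z (prodι K (l ++ [a])) = prodι K (a :: l)) (u v : List W) :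
    (z ^ v.length) (prodι K (u ++ v)) = prodι K (v ++ u) := by
  induction v using List.reverseRecOn generalizing u with
  | nil => simp
  | append_singleton v b ih =>
    rw [List.length_append, List.length_singleton, pow_succ, Module.End.mul_apply,
      ← List.append_assoc, hz, ← List.cons_append, ih]
    simp

theorem sum_pow_apply_prodι
    (hz : ∀ (l : List W) (a : W), z (prodι K (l ++ [a])) = prodι K (a :: l)) (l : List W) :
    ∑ i ∈ Finset.range l.length, (z ^ i) (prodι K l)
      = ∑ k ∈ Finset.range l.length, prodι K (l.rotate k) := by
  have pow_apply : ∀ k < l.length,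
      (z ^ (l.length - 1 - k)) (prodι K l) = prodι K (l.rotate (k + 1)) := by
    intro k hk
    rw [show l.length - 1 - k = (l.drop (k + 1)).length by simp; omega,
      List.rotate_eq_drop_append_take hk, ← pow_length_apply_prodι_append hz,
      List.take_append_drop]
  rw [← Finset.sum_range_reflect,
    Finset.sum_congr rfl fun k hk => pow_apply k (Finset.mem_range.1 hk)]
  have shift := Finset.sum_range_succ' (fun k => prodι K (l.rotate k)) l.length
  rw [Finset.sum_range_succ, List.rotate_length, List.rotate_zero] at shift
  exact add_right_cancel shift.symm

end CyclicOperator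

theorem stmt17_general {K W : Type*} [Field K] [AddCommGroup W] [Module K W]
    (z N st : Module.End K (TensorAlgebra K W))
    (hz : ∀ (l : List W) (a : W), z (prodι K (l ++ [a])) = prodι K (a :: l))
    (hN : ∀ l : List W, N (prodι K l) = ∑ i ∈ Finset.range l.length, (z ^ i) (prodι K l))
    (hst : ∀ (a : W) (l : List W),
      st (prodι K (a :: l)) = TensorAlgebra.ι K a * shuffleOp K W (prodι K l)) :
    ∀ l : List W, l ≠ [] →
      2 • st (N (prodι K l)) = N (shuffleOp K W (prodι K l)) := by
  intro l _
  have N_prodι (m : List W) :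
      N (prodι K m) = ∑ k ∈ Finset.range m.length, prodι K (m.rotate k) :=
    (hN m).trans (sum_pow_apply_prodι hz m)
  calc 2 • st (N (prodι K l))
      = 2 • ∑ j ∈ Finset.range l.length, ((l.drop (j + 1) ++ l.take j).unshuffles.map fun q =>
          prodι K (l.getD j 0 :: (q.1 ++ q.2))).sum := by
        rw [N_prodι, map_sum]
        congr 1
        refine Finset.sum_congr rfl fun j hj => ?_
        rw [List.rotate_eq_getD_cons 0 (Finset.mem_range.1 hj), hst, ι_mul_shuffleOp_prodι]
    _ = (l.unshuffles.map fun p =>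
          ∑ k ∈ Finset.range (p.1 ++ p.2).length, prodι K ((p.1 ++ p.2).rotate k)).sum := by
        rw [List.sum_range_sum_unshuffles_drop_append_take, List.sum_unshuffles_sum_range_rotate]
    _ = N (shuffleOp K W (prodι K l)) := by
        simp only [shuffleOp_prodι, map_multiset_sum, Multiset.map_map, Function.comp_def,
          N_prodι]

/-- `2 · s̃ ∘ N = N ∘ s` on `⊕_{i ≥ 1} W^{⊗i}`.  Here `z` is the cyclic
permutation operator, `N` the norm operator `Σ_{i<n} zⁱ` on `W^{⊗n}`, and `s̃ = 1 ⊗ s`. -/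
theorem stmt17 {K W : Type*} [Field K] [CharZero K] [AddCommGroup W] [Module K W]
    (z N st : Module.End K (TensorAlgebra K W))
    (hz : ∀ (l : List W) (a : W), z (prodι K (l ++ [a])) = prodι K (a :: l))
    (hN : ∀ l : List W, N (prodι K l) = ∑ i ∈ Finset.range l.length, (z ^ i) (prodι K l))
    (hst : ∀ (a : W) (l : List W),
      st (prodι K (a :: l)) = TensorAlgebra.ι K a * shuffleOp K W (prodι K l)) :
    ∀ l : List W, l ≠ [] →
      2 • st (N (prodι K l)) = N (shuffleOp K W (prodι K l)) :=
  stmt17_general z N st hz hN hst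
end
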